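/- Let Q ⊆ S ⊆ L be fields with L quasireal and S a finite Galois extension of Q. If L is a repeated radical extension of Q, then [S:Q] is a power of 2. Conversely, if [S:Q] is a power of 2, then S itself is a repeated radical extension of Q. -/

import Mathlib

/-- A field is quasireal if it has characteristic zero and its only roots of
unity are `±1`. -/
def IsQuasireal (L : Type*) [Field L] : Prop :=
  CharZero L ∧ ∀ ζ : L, (∃ n : ℕ, 0 < n ∧ ζ ^ n = 1) → ζ = 1 ∨ ζ = -1

/-- `B = A[α]` for some `α` with a positive power of `α` in `A`
(a single radical step, inside a fixed ambient extension `E` of `Q`). -/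
def RadicalStep (Q E : Type*) [Field Q] [Field E] [Algebra Q E]
    (A B : IntermediateField Q E) : Prop :=
  ∃ α : E, (∃ n : ℕ, 0 < n ∧ α ^ n ∈ A) ∧ B = A ⊔ IntermediateField.adjoin Q {α}

/-- `B` is obtained from `A` by a finite tower of radical extensions. -/
def IsRepeatedRadical (Q E : Type*) [Field Q] [Field E] [Algebra Q E]
    (A B : IntermediateField Q E) : Prop :=
  Relation.ReflTransGen (RadicalStep Q E) A B

/-!
Split every radical step into steps of prime exponent and induct on their number, replacing the
base field `K` by `K⟮α⟯` after the first step `K ⊆ K⟮α⟯`, `α ^ p ∈ K`. For `S/K` finite Galois,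
`S⟮α⟯` is Galois over `K⟮α⟯`, so `[S⟮α⟯ : K⟮α⟯] = 2 ^ k` by induction. In a quasireal field
`x ^ p = y ^ p` forces `x = ± y`. So if `α ∈ S`, all conjugates of `α` lie in `{α, -α}` and
`[K⟮α⟯ : K] ≤ 2`; if `α ∉ S`, then `X ^ p - α ^ p` has no root in `K` nor in `S`, hence is
irreducible over both, and `[S⟮α⟯ : S] = [K⟮α⟯ : K] = p` gives `[S : K] = 2 ^ k`.

Conversely, a Galois group of order `2 ^ k` has a chain of subgroups of orders `1, 2, …, 2 ^ k`;
their fixed fields form a tower of quadratic extensions, and in characteristic zero each of them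
is obtained by adjoining a square root (Kummer theory with the root of unity `-1`).
-/

open IntermediateField Polynomial Module

universe u v

section ExtendScalars

variable {K L : Type*} [Field K] [Field L] [Algebra K L]

theorem extendScalars_sup_adjoin_simple {F A : IntermediateField K L} (h : F ≤ A) (α : L) :
    extendScalars (h.trans le_sup_left : F ≤ A ⊔ K⟮α⟯) = extendScalars h ⊔ F⟮α⟯ := by
  apply restrictScalars_injective K
  rw [extendScalars_restrictScalars, ← restrictScalars_sup, extendScalars_restrictScalars,
    restrictScalars_adjoin_eq_sup, ← sup_assoc, sup_eq_left.mpr h]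

theorem extendScalars_le_sup_adjoin_simple (F : IntermediateField K L) (α : L) :
    extendScalars (le_sup_left : F ≤ F ⊔ K⟮α⟯) = F⟮α⟯ := by
  rw [extendScalars_sup_adjoin_simple le_rfl, extendScalars_self, bot_sup_eq]

theorem isGalois_finiteDimensional_extendScalars_sup (S C : IntermediateField K L) [IsGalois K S]
    [FiniteDimensional K S] :
    IsGalois C (extendScalars (le_sup_right : C ≤ S ⊔ C)) ∧
      FiniteDimensional C (extendScalars (le_sup_right : C ≤ S ⊔ C)) := by
  obtain ⟨f, hsep, hf⟩ := IsGalois.is_separable_splitting_field K S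
  rw [isSplittingField_iff] at hf
  have hroots : (f.map (algebraMap K C)).rootSet L = f.rootSet L := by
    classical simp [rootSet_def]
  have hT : extendScalars (le_sup_right : C ≤ S ⊔ C) =
      adjoin C ((f.map (algebraMap K C)).rootSet L) := by
    apply restrictScalars_injective K
    rw [extendScalars_restrictScalars, restrictScalars_adjoin_eq_sup, hroots, ← hf.2, sup_comm]
  have : (f.map (algebraMap K C)).IsSplittingField C (extendScalars (le_sup_right : C ≤ S ⊔ C)) :=
    hT ▸ adjoin_rootSet_isSplittingField
      (by rw [Polynomial.map_map, ← IsScalarTower.algebraMap_eq, IsScalarTower.algebraMap_eq K S L,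
        ← Polynomial.map_map]; exact hf.1.map _)
  exact ⟨.of_separable_splitting_field (hsep.map (f := algebraMap K C)),
    IsSplittingField.finiteDimensional _ (f.map (algebraMap K C))⟩

end ExtendScalars

section RadicalTower

variable {K L : Type*} [Field K] [Field L] [Algebra K L]

theorem RadicalStep.map {M : Type*} [Field M] [Algebra K M] (f : L →ₐ[K] M)
    {A B : IntermediateField K L} (h : RadicalStep K L A B) :
    RadicalStep K M (A.map f) (B.map f) := by
  obtain ⟨α, ⟨n, hn, hα⟩, rfl⟩ := h
  exact ⟨f α, ⟨n, hn, α ^ n, hα, map_pow f α n⟩,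
    by rw [IntermediateField.map_sup, adjoin_map, Set.image_singleton]⟩

theorem IsRepeatedRadical.map {M : Type*} [Field M] [Algebra K M] (f : L →ₐ[K] M)
    {A B : IntermediateField K L} (h : IsRepeatedRadical K L A B) :
    IsRepeatedRadical K M (A.map f) (B.map f) :=
  Relation.ReflTransGen.lift (IntermediateField.map f) (fun _ _ ↦ RadicalStep.map f) A B h

/-- Indexed by its length so that an induction on the length may change the base field. -/
def PrimeRadicalChain (K L : Type*) [Field K] [Field L] [Algebra K L] :
    ℕ → IntermediateField K L → IntermediateField K L → Prop
  | 0, A, B => A = B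
  | n + 1, A, B => ∃ α : L, (∃ p : ℕ, p.Prime ∧ α ^ p ∈ A) ∧ PrimeRadicalChain K L n (A ⊔ K⟮α⟯) B

namespace PrimeRadicalChain

theorem le : ∀ {n : ℕ} {A B : IntermediateField K L}, PrimeRadicalChain K L n A B → A ≤ B
  | 0, _, _, h => le_of_eq h
  | _ + 1, _, _, ⟨_, _, h⟩ => le_sup_left.trans h.le

theorem trans : ∀ {m n : ℕ} {A B C : IntermediateField K L},
    PrimeRadicalChain K L m A B → PrimeRadicalChain K L n B C → PrimeRadicalChain K L (n + m) A C
  | 0, _, _, _, _, rfl, h => h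
  | _ + 1, _, _, _, _, ⟨α, hα, h₁⟩, h₂ => ⟨α, hα, h₁.trans h₂⟩

theorem extendScalars {F : IntermediateField K L} : ∀ {n : ℕ} {A B : IntermediateField K L},
    PrimeRadicalChain K L n A B → (hA : F ≤ A) → (hB : F ≤ B) →
      PrimeRadicalChain F L n (extendScalars hA) (extendScalars hB)
  | 0, _, _, rfl, _, _ => rfl
  | _ + 1, _, _, ⟨α, hα, h⟩, hA, hB =>
    ⟨α, hα, by rw [← extendScalars_sup_adjoin_simple]; exact h.extendScalars _ hB⟩

end PrimeRadicalChain

theorem exists_primeRadicalChain_sup_adjoin_simple {n : ℕ} (hn : 0 < n) {A : IntermediateField K L}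
    {α : L} (hα : α ^ n ∈ A) : ∃ m, PrimeRadicalChain K L m A (A ⊔ K⟮α⟯) := by
  induction n using Nat.recOnMul generalizing A α with
  | zero => exact absurd hn (lt_irrefl 0)
  | one => exact ⟨0, (sup_eq_left.mpr (adjoin_simple_le_iff.mpr (pow_one α ▸ hα))).symm⟩
  | prime p hp => exact ⟨1, α, ⟨p, hp, hα⟩, rfl⟩
  | mul a b iha ihb =>
    obtain ⟨l, hl⟩ := ihb (Nat.pos_of_mul_pos_left hn) (α := α ^ a) (by rwa [← pow_mul])
    obtain ⟨m, hm⟩ := iha (Nat.pos_of_mul_pos_right hn) (A := A ⊔ K⟮α ^ a⟯) (α := α)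
      ((le_sup_right : K⟮α ^ a⟯ ≤ _) (mem_adjoin_simple_self K _))
    have hsup : A ⊔ K⟮α ^ a⟯ ⊔ K⟮α⟯ = A ⊔ K⟮α⟯ := by
      rw [sup_assoc, sup_eq_right.mpr (adjoin_simple_le_iff.mpr
        (pow_mem (mem_adjoin_simple_self K α) a))]
    exact ⟨_, hsup ▸ hl.trans hm⟩

theorem IsRepeatedRadical.exists_primeRadicalChain {A B : IntermediateField K L}
    (h : IsRepeatedRadical K L A B) : ∃ n, PrimeRadicalChain K L n A B := by
  induction h with
  | refl => exact ⟨0, rfl⟩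
  | tail _ hstep ih =>
    obtain ⟨m, hm⟩ := ih
    obtain ⟨α, ⟨n, hn, hα⟩, rfl⟩ := hstep
    obtain ⟨l, hl⟩ := exists_primeRadicalChain_sup_adjoin_simple hn hα
    exact ⟨_, hm.trans hl⟩

end RadicalTower

def GaloisSubfieldsTwoPower (K L : Type*) [Field K] [Field L] [Algebra K L]
    (B : IntermediateField K L) : Prop :=
  ∀ S ≤ B, IsGalois K S → FiniteDimensional K S → ∃ k, finrank K S = 2 ^ k

theorem galoisSubfieldsTwoPower_bot (K L : Type*) [Field K] [Field L] [Algebra K L] :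
    GaloisSubfieldsTwoPower K L ⊥ :=
  fun S hS _ _ ↦ ⟨0, by rw [le_bot_iff.mp hS, IntermediateField.finrank_bot, pow_zero]⟩

namespace IsQuasireal

variable {L : Type v} [Field L] (hL : IsQuasireal L)
include hL

theorem eq_or_eq_neg_of_pow_eq {n : ℕ} (hn : 0 < n) {x y : L} (h : x ^ n = y ^ n) :
    x = y ∨ x = -y := by
  rcases eq_or_ne y 0 with rfl | hy
  · exact .inl (pow_eq_zero_iff hn.ne' |>.mp (h.trans (zero_pow hn.ne')))
  rcases hL.2 (x / y) ⟨n, hn, by rw [div_pow, h, div_self (pow_ne_zero n hy)]⟩ with h1 | h1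
  · exact .inl ((div_eq_one_iff_eq hy).mp h1)
  · exact .inr (by rw [div_eq_iff hy] at h1; rw [h1, neg_one_mul])

theorem finrank_adjoin_simple_of_prime {K : Type*} [Field K] [Algebra K L] {p : ℕ}
    (hp : p.Prime) {α : L} (hα : α ∉ (⊥ : IntermediateField K L))
    (hαp : α ^ p ∈ (⊥ : IntermediateField K L)) : finrank K K⟮α⟯ = p := by
  obtain ⟨a, ha⟩ := mem_bot.mp hαp
  have hirr : Irreducible (X ^ p - C a) := X_pow_sub_C_irreducible_of_prime hp fun b hb ↦ hα <| by
    rcases hL.eq_or_eq_neg_of_pow_eq hp.pos (x := algebraMap K L b) (y := α)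
      (by rw [← map_pow, hb, ha]) with h | h
    · exact mem_bot.mpr ⟨b, h⟩
    · exact mem_bot.mpr ⟨-b, by rw [map_neg, h, neg_neg]⟩
  have hroot : aeval α (X ^ p - C a) = 0 := by simp [ha]
  rw [adjoin.finrank (.of_pow hp.pos (ha ▸ isIntegral_algebraMap)),
    ← minpoly.eq_of_irreducible_of_monic hirr hroot (monic_X_pow_sub_C a hp.ne_zero),
    natDegree_X_pow_sub_C]

theorem finrank_adjoin_simple_le_two {K : Type*} [Field K] [Algebra K L]
    {S : IntermediateField K L} [IsGalois K S] {α : L} (hαS : α ∈ S) {n : ℕ} (hn : 0 < n)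
    (hαn : α ^ n ∈ (⊥ : IntermediateField K L)) : finrank K K⟮α⟯ ≤ 2 := by
  obtain ⟨a, ha⟩ := mem_bot.mp hαn
  have hint : IsIntegral K α := .of_pow hn (ha ▸ isIntegral_algebraMap)
  have hsplit : Splits ((minpoly K α).map (algebraMap K L)) := by
    have := ((IsGalois.to_normal (F := K) (E := S)).splits ⟨α, hαS⟩).map (algebraMap S L)
    rwa [minpoly_eq, Polynomial.map_map, ← IsScalarTower.algebraMap_eq] at this
  have hsep : (minpoly K α).Separable := by
    have := Algebra.IsSeparable.isSeparable K (⟨α, hαS⟩ : S)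
    rwa [IsSeparable, minpoly_eq] at this
  have hconj : (minpoly K α).rootSet L ⊆ {α, -α} := fun β hβ ↦ by
    have hdvd : minpoly K α ∣ X ^ n - C a := minpoly.dvd K α (by simp [ha])
    have hβn : β ^ n = α ^ n := by
      simpa [sub_eq_zero, ha] using aeval_eq_zero_of_dvd_aeval_eq_zero hdvd (mem_rootSet.mp hβ).2
    exact hL.eq_or_eq_neg_of_pow_eq hn hβn
  rw [adjoin.finrank hint, ← card_rootSet_eq_natDegree hsep hsplit, ← Nat.card_eq_fintype_card,
    Nat.card_coe_set_eq]
  calc _ ≤ ({α, -α} : Set L).ncard := Set.ncard_le_ncard hconj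
    _ ≤ ({-α} : Set L).ncard + 1 := Set.ncard_insert_le _ _
    _ = 2 := by rw [Set.ncard_singleton]

theorem galoisSubfieldsTwoPower_of_primeRadicalChain_succ {K : Type u} [Field K] [Algebra K L]
    {m : ℕ} (ih : ∀ (F : Type v) [Field F] [Algebra F L] (B : IntermediateField F L),
      PrimeRadicalChain F L m ⊥ B → GaloisSubfieldsTwoPower F L B)
    {B : IntermediateField K L} (hB : PrimeRadicalChain K L (m + 1) ⊥ B) :
    GaloisSubfieldsTwoPower K L B := by
  intro S hSB _ _
  obtain ⟨α, ⟨p, hp, hαp⟩, hCB⟩ := hB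
  rw [bot_sup_eq] at hCB
  obtain ⟨hTgal, hTfin⟩ := isGalois_finiteDimensional_extendScalars_sup S K⟮α⟯
  have hchain : PrimeRadicalChain K⟮α⟯ L m ⊥ (extendScalars hCB.le) := by
    simpa only [extendScalars_self] using hCB.extendScalars le_rfl hCB.le
  obtain ⟨k, hk⟩ := ih K⟮α⟯ (extendScalars hCB.le) hchain
    (extendScalars (le_sup_right : K⟮α⟯ ≤ S ⊔ K⟮α⟯))
    ((extendScalars_le_extendScalars_iff _ _).mpr (sup_le hSB hCB.le)) hTgal hTfin
  have htower : finrank K S * relfinrank S (S ⊔ K⟮α⟯) = finrank K K⟮α⟯ * 2 ^ k := by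
    rw [finrank_bot_mul_relfinrank le_sup_left, ← finrank_bot_mul_relfinrank le_sup_right,
      relfinrank_eq_finrank_of_le le_sup_right, hk]
  by_cases hαS : α ∈ S
  · rw [sup_eq_left.mpr (adjoin_simple_le_iff.mpr hαS), relfinrank_self, mul_one] at htower
    have hle := hL.finrank_adjoin_simple_le_two hαS hp.pos hαp
    have hpos : 0 < finrank K K⟮α⟯ := Nat.pos_of_mul_pos_right (htower ▸ finrank_pos)
    interval_cases h : finrank K K⟮α⟯
    · exact ⟨k, by rw [htower, one_mul]⟩
    · exact ⟨k + 1, by rw [htower, pow_succ']⟩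
  · have hdegK := hL.finrank_adjoin_simple_of_prime hp (fun h ↦ hαS ((bot_le : ⊥ ≤ S) h)) hαp
    have hdegS : finrank S S⟮α⟯ = p := hL.finrank_adjoin_simple_of_prime hp
      (fun ⟨s, hs⟩ ↦ hαS (hs ▸ s.2)) (mem_bot.mpr ⟨⟨α ^ p, (bot_le : ⊥ ≤ S) hαp⟩, rfl⟩)
    rw [relfinrank_eq_finrank_of_le le_sup_left, extendScalars_le_sup_adjoin_simple, hdegS,
      hdegK, mul_comm] at htower
    exact ⟨k, Nat.eq_of_mul_eq_mul_left hp.pos htower⟩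

-- The induction moves the base field to `K⟮α⟯ : Type v`, so it is run for bases in the universe
-- of `L` first.
theorem galoisSubfieldsTwoPower_of_primeRadicalChain_sameUniverse :
    ∀ (n : ℕ) (F : Type v) [Field F] [Algebra F L] (B : IntermediateField F L),
      PrimeRadicalChain F L n ⊥ B → GaloisSubfieldsTwoPower F L B
  | 0, F, _, _, _, rfl => galoisSubfieldsTwoPower_bot F L
  | n + 1, _, _, _, _, hB => hL.galoisSubfieldsTwoPower_of_primeRadicalChain_succ
      (galoisSubfieldsTwoPower_of_primeRadicalChain_sameUniverse n) hB

theorem galoisSubfieldsTwoPower_of_primeRadicalChain {K : Type u} [Field K] [Algebra K L] :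
    ∀ {n : ℕ} {B : IntermediateField K L}, PrimeRadicalChain K L n ⊥ B →
      GaloisSubfieldsTwoPower K L B
  | 0, _, rfl => galoisSubfieldsTwoPower_bot K L
  | n + 1, _, hB => hL.galoisSubfieldsTwoPower_of_primeRadicalChain_succ
      (hL.galoisSubfieldsTwoPower_of_primeRadicalChain_sameUniverse n) hB

end IsQuasireal

section Converse

variable {K M : Type*} [Field K] [Field M] [Algebra K M]

theorem radicalStep_of_relfinrank_eq_two [CharZero M] {A B : IntermediateField K M} (hAB : A ≤ B)
    (h : relfinrank A B = 2) : RadicalStep K M A B := by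
  set E := extendScalars hAB
  have hE : finrank A E = 2 := relfinrank_eq_finrank_of_le hAB ▸ h
  have : Algebra.IsQuadraticExtension A E := ⟨hE⟩
  have : FiniteDimensional A E := .of_finrank_pos (by omega)
  obtain ⟨α, ⟨a, ha⟩, hα⟩ := exists_root_adjoin_eq_top_of_isCyclic A E
    (hE ▸ ⟨-1, (mem_primitiveRoots two_pos).mpr (IsPrimitiveRoot.neg_one 0 (by simp))⟩)
  refine ⟨α, ⟨2, two_pos, ?_⟩, ?_⟩
  · rw [hE] at ha
    have : (a : M) = (α : M) ^ 2 := by simpa using congrArg (Subtype.val : E → M) ha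
    exact this ▸ a.2
  · have hEα : E = A⟮(α : M)⟯ := by
      simpa [lift_adjoin] using (congrArg lift hα).symm
    rw [← restrictScalars_adjoin_eq_sup, ← hEα]
    rfl

theorem relfinrank_fixedField_mul_card [FiniteDimensional K M] {H H' : Subgroup Gal(M/K)}
    (h : H ≤ H') : relfinrank (fixedField H') (fixedField H) * Nat.card H = Nat.card H' := by
  rw [← finrank_fixedField_eq_card, ← finrank_fixedField_eq_card,
    relfinrank_mul_finrank_top (fixedField_le h)]

theorem isRepeatedRadical_bot_top_of_finrank_eq_two_pow [CharZero M] [IsGalois K M]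
    [FiniteDimensional K M] {k : ℕ} (hk : finrank K M = 2 ^ k) : IsRepeatedRadical K M ⊥ ⊤ := by
  have hG : Nat.card Gal(M/K) = 2 ^ k := by rw [IsGalois.card_aut_eq_finrank, hk]
  have : Fact (Nat.Prime 2) := ⟨Nat.prime_two⟩
  have tower : ∀ n ≤ k, ∃ H : Subgroup Gal(M/K),
      Nat.card H = 2 ^ n ∧ IsRepeatedRadical K M (fixedField H) ⊤ := by
    intro n hn
    induction n with
    | zero => exact ⟨⊥, by simp, by rw [fixedField_bot]; exact .refl⟩
    | succ n ih =>
      obtain ⟨H, hH, hHtop⟩ := ih (by omega)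
      obtain ⟨H', hH', hHH'⟩ := Sylow.exists_subgroup_card_pow_succ (hG ▸ pow_dvd_pow 2 hn) hH
      have hdeg : relfinrank (fixedField H') (fixedField H) = 2 := by
        have := relfinrank_fixedField_mul_card hHH'
        rw [hH, hH', pow_succ'] at this
        exact Nat.eq_of_mul_eq_mul_right (by positivity) this
      exact ⟨H', hH', .head (radicalStep_of_relfinrank_eq_two (fixedField_le hHH') hdeg) hHtop⟩
  obtain ⟨H, hH, hHtop⟩ := tower k le_rfl
  rwa [Subgroup.eq_top_of_card_eq H (hH.trans hG.symm), IsGalois.fixedField_top] at hHtop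

end Converse

/-- Let `Q ⊆ S ⊆ L` with `L` quasireal and `S` finite Galois over `Q`. If `L` is a
repeated radical extension of `Q` then `[S : Q]` is a power of `2`; conversely if
`[S : Q]` is a power of `2` then `S` is a repeated radical extension of `Q`. -/
theorem stmt12 (Q L : Type*) [Field Q] [Field L] [Algebra Q L]
    (hLqr : IsQuasireal L) (S : IntermediateField Q L)
    (hSgal : IsGalois Q S) (hSfin : FiniteDimensional Q S) :
    (IsRepeatedRadical Q L ⊥ ⊤ → ∃ k : ℕ, Module.finrank Q S = 2 ^ k) ∧
      ((∃ k : ℕ, Module.finrank Q S = 2 ^ k) → IsRepeatedRadical Q L ⊥ S) := by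
  refine ⟨fun h ↦ ?_, fun ⟨k, hk⟩ ↦ ?_⟩
  · obtain ⟨n, hn⟩ := h.exists_primeRadicalChain
    exact hLqr.galoisSubfieldsTwoPower_of_primeRadicalChain hn S le_top hSgal hSfin
  · have : CharZero L := hLqr.1
    have := (isRepeatedRadical_bot_top_of_finrank_eq_two_pow hk).map S.val
    rwa [← lift, lift_bot, ← lift, lift_top] at this
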